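/- arXiv:2505.10891 — 2 statements merged into one kernel-verified Lean document; each statement's English description precedes it below -/
import Mathlib

section
/- Let ω(z) = Σ_{n≥1} cₙ zⁿ be a Schwarz function. If 2 ≤ |σ| ≤ 4 and μ ≥ (σ² + 8)/12, then |c₃ + σ c₁ c₂ + μ c₁³| ≤ μ. -/
open Complex Metric

noncomputable section

/-- A Schwarz function: analytic self-map of the unit disk fixing 0. -/
def IsSchwarz (w : ℂ → ℂ) : Prop :=
  DifferentiableOn ℂ w (ball (0:ℂ) 1) ∧ w 0 = 0 ∧ ∀ z ∈ ball (0:ℂ) 1, w z ∈ ball (0:ℂ) 1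

/-- `f` belongs to the class `𝒜` with Taylor coefficients `a`:
`f z = z + a₂ z² + a₃ z³ + ⋯` on the unit disk. -/
def InClassA (f : ℂ → ℂ) (a : ℕ → ℂ) : Prop :=
  a 0 = 0 ∧ a 1 = 1 ∧ ∀ z ∈ ball (0:ℂ) 1, HasSum (fun n => a n * z ^ n) (f z)

/-- `f ∈ 𝒮*(φ)`, i.e. `z f'(z)/f(z) ≺ φ(z)`, written without division. -/
def MemStarPhi (phi f : ℂ → ℂ) : Prop :=
  ∃ w, IsSchwarz w ∧ ∀ z ∈ ball (0:ℂ) 1, z * deriv f z = phi (w z) * f z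

/-- `f ∈ 𝒞(φ)`, i.e. `1 + z f''(z)/f'(z) ≺ φ(z)`, written without division. -/
def MemConvexPhi (phi f : ℂ → ℂ) : Prop :=
  ∃ w, IsSchwarz w ∧ ∀ z ∈ ball (0:ℂ) 1,
    deriv f z + z * deriv (deriv f) z = phi (w z) * deriv f z

/-- `φ` is a Ma–Minda function with (real) Taylor coefficients `B`:
analytic, univalent, `φ(0) = 1`, `B₁ > 0`, image in the right half-plane,
symmetric about the real axis, and starlike with respect to `1`. -/
def IsMaMinda (phi : ℂ → ℂ) (B : ℕ → ℝ) : Prop :=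
  DifferentiableOn ℂ phi (ball (0:ℂ) 1) ∧ Set.InjOn phi (ball (0:ℂ) 1) ∧
  (∀ z ∈ ball (0:ℂ) 1, HasSum (fun n => (B n : ℂ) * z ^ n) (phi z)) ∧
  B 0 = 1 ∧ 0 < B 1 ∧ (∀ z ∈ ball (0:ℂ) 1, 0 < (phi z).re) ∧
  (∀ z ∈ ball (0:ℂ) 1, phi ((starRingEnd ℂ) z) = (starRingEnd ℂ) (phi z)) ∧
  StarConvex ℝ (1 : ℂ) (phi '' ball (0:ℂ) 1)

/-- `f` is starlike of order `α` (univalent, normalized analyticity is stated separately). -/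
def IsStarlikeOfOrder (f : ℂ → ℂ) (α : ℝ) : Prop :=
  DifferentiableOn ℂ f (ball (0:ℂ) 1) ∧ Set.InjOn f (ball (0:ℂ) 1) ∧
  ∀ z ∈ ball (0:ℂ) 1, z ≠ 0 → α < (z * deriv f z / f z).re

/-- `f` is a convex function. -/
def IsConvexFun (f : ℂ → ℂ) : Prop :=
  DifferentiableOn ℂ f (ball (0:ℂ) 1) ∧ Set.InjOn f (ball (0:ℂ) 1) ∧
  ∀ z ∈ ball (0:ℂ) 1, 0 < (1 + z * deriv (deriv f) z / deriv f z).re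

/-- First logarithmic coefficient of the inverse, in terms of the coefficients of `f`. -/
def G₁ (a : ℕ → ℂ) : ℂ := -(a 2) / 2
/-- Second logarithmic coefficient of the inverse. -/
def G₂ (a : ℕ → ℂ) : ℂ := -(1/2) * (a 3 - (3/2) * a 2 ^ 2)
/-- Third logarithmic coefficient of the inverse. -/
def G₃ (a : ℕ → ℂ) : ℂ := -(1/2) * (a 4 - 4 * a 2 * a 3 + (10/3) * a 2 ^ 3)
/-- Second Taylor coefficient of the inverse function. -/
def bc₂ (a : ℕ → ℂ) : ℂ := -(a 2)
/-- Third Taylor coefficient of the inverse function. -/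
def bc₃ (a : ℕ → ℂ) : ℂ := 2 * a 2 ^ 2 - a 3
/-- Fourth Taylor coefficient of the inverse function. -/
def bc₄ (a : ℕ → ℂ) : ℂ := -5 * a 2 ^ 3 + 5 * a 2 * a 3 - a 4

/-- Region `Ω₁` of Prokhorov–Szynal. -/
def Omega1 (s m : ℝ) : Prop := |s| ≤ 2 ∧ 1 ≤ m
/-- Region `Ω₂` of Prokhorov–Szynal. -/
def Omega2 (s m : ℝ) : Prop := 2 ≤ |s| ∧ |s| ≤ 4 ∧ (s ^ 2 + 8) / 12 ≤ m
/-- Region `Ω₃` of Prokhorov–Szynal. -/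
def Omega3 (s m : ℝ) : Prop := 4 ≤ |s| ∧ (2/3) * (|s| - 1) ≤ m

/-!
With `g = ω/z` and `t = 1 - |c₁|²`, Carlson's inequality `|c₃ t + c̄₁ c₂²| ≤ t² - |c₂|²` is the
Schwarz–Pick bound `|f'(0)| ≤ 1 - |f(0)|²` applied to the Schur transform `f = (φ ∘ g)/z` of `g`,
where `φ` is the disk automorphism sending `g(0)` to `0`. Writing
`t (c₃ + σ c₁ c₂ + μ c₁³) = (c₃ t + c̄₁ c₂²) + P`, it remains to bound `|P| ≤ tμ - t² + |c₂|²`;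
in the variables `|c₁|², |c₂|², Re(c₁² c̄₂)` this is a polynomial inequality with a
sum-of-squares certificate. If `g` is a unimodular constant, then `c₂ = c₃ = 0`.
-/

open Topology Filter Set ComplexConjugate

def diskMobius (a z : ℂ) : ℂ := (z - a) / (1 - conj a * z)

lemma one_sub_conj_mul_ne_zero {a z : ℂ} (ha : ‖a‖ < 1) (hz : ‖z‖ ≤ 1) :
    1 - conj a * z ≠ 0 := by
  rw [sub_ne_zero]
  intro h
  have : ‖conj a * z‖ < 1 := by
    rw [norm_mul, Complex.norm_conj]
    nlinarith [norm_nonneg a, norm_nonneg z]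
  simp [← h] at this

lemma one_sub_conj_mul_self (a : ℂ) : 1 - conj a * a = ((1 - ‖a‖ ^ 2 : ℝ) : ℂ) := by
  rw [Complex.conj_mul']; push_cast; rfl

lemma norm_diskMobius_lt_one {a z : ℂ} (ha : ‖a‖ < 1) (hz : ‖z‖ < 1) :
    ‖diskMobius a z‖ < 1 := by
  have hden := one_sub_conj_mul_ne_zero ha hz.le
  have hgap : ‖1 - conj a * z‖ ^ 2 - ‖z - a‖ ^ 2 = (1 - ‖a‖ ^ 2) * (1 - ‖z‖ ^ 2) := by
    simp only [← Complex.normSq_eq_norm_sq, Complex.normSq_apply, Complex.sub_re,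
      Complex.sub_im, Complex.mul_re, Complex.mul_im, Complex.conj_re, Complex.conj_im,
      Complex.one_re, Complex.one_im]
    ring
  rw [diskMobius, norm_div, div_lt_one (norm_pos_iff.2 hden)]
  refine lt_of_pow_lt_pow_left₀ 2 (norm_nonneg _) ?_
  nlinarith [mul_pos (sub_pos.2 (pow_lt_one₀ (norm_nonneg a) ha two_ne_zero))
    (sub_pos.2 (pow_lt_one₀ (norm_nonneg z) hz two_ne_zero))]

lemma diskMobius_self (a : ℂ) : diskMobius a a = 0 := by simp [diskMobius]

lemma differentiableAt_diskMobius {a z : ℂ} (ha : ‖a‖ < 1) (hz : ‖z‖ ≤ 1) :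
    DifferentiableAt ℂ (diskMobius a) z :=
  ((differentiableAt_id.sub_const a).div ((differentiableAt_const _).sub
    (differentiableAt_id.const_mul _)) (one_sub_conj_mul_ne_zero ha hz))

lemma hasDerivAt_diskMobius_self {a : ℂ} (ha : ‖a‖ < 1) :
    HasDerivAt (diskMobius a) (1 - conj a * a)⁻¹ a := by
  have hden := one_sub_conj_mul_ne_zero ha ha.le
  have := ((hasDerivAt_id a).sub_const a).div
    (((hasDerivAt_id a).const_mul (conj a)).const_sub 1) hden
  refine HasDerivAt.congr_deriv (f := diskMobius a) this ?_
  simp only [id, sub_self, zero_mul, sub_zero, one_mul]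
  field_simp

lemma mapsTo_ball_or_eqOn_const {f : ℂ → ℂ} (hd : DifferentiableOn ℂ f (ball 0 1))
    (hf : MapsTo f (ball 0 1) (closedBall 0 1)) :
    MapsTo f (ball 0 1) (ball 0 1) ∨ ∃ b, EqOn f (fun _ => b) (ball 0 1) := by
  by_cases h : ∃ z₀ ∈ ball (0 : ℂ) 1, 1 ≤ ‖f z₀‖
  · obtain ⟨z₀, hz₀, h1⟩ := h
    refine .inr ⟨f z₀, Complex.eqOn_of_isPreconnected_of_isMaxOn_norm
      (convex_ball 0 1).isPreconnected isOpen_ball hd hz₀ fun z hz => ?_⟩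
    exact (mem_closedBall_zero_iff.1 (hf hz)).trans h1
  · push Not at h
    exact .inl fun z hz => mem_ball_zero_iff.2 (h z hz)

theorem norm_deriv_le_one_sub_sq_of_mapsTo_ball {f : ℂ → ℂ}
    (hd : DifferentiableOn ℂ f (ball 0 1)) (hf : MapsTo f (ball 0 1) (ball 0 1)) :
    ‖deriv f 0‖ ≤ 1 - ‖f 0‖ ^ 2 := by
  set a := f 0
  have ha : ‖a‖ < 1 := mem_ball_zero_iff.1 (hf (mem_ball_self one_pos))
  have ht : 0 < 1 - ‖a‖ ^ 2 := sub_pos.2 (pow_lt_one₀ (norm_nonneg a) ha two_ne_zero)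
  have hmd : DifferentiableOn ℂ (diskMobius a ∘ f) (ball 0 1) := fun z hz =>
    (differentiableAt_diskMobius ha (mem_ball_zero_iff.1 (hf hz)).le).comp_differentiableWithinAt
      z (hd z hz)
  have hmaps : MapsTo (diskMobius a ∘ f) (ball 0 1) (closedBall ((diskMobius a ∘ f) 0) 1) := by
    intro z hz
    rw [Function.comp_apply, diskMobius_self, mem_closedBall_zero_iff]
    exact (norm_diskMobius_lt_one ha (mem_ball_zero_iff.1 (hf hz))).le
  have hderiv : HasDerivAt (diskMobius a ∘ f) ((1 - conj a * a)⁻¹ * deriv f 0) 0 :=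
    (hasDerivAt_diskMobius_self ha).comp 0
      (hd.differentiableAt (ball_mem_nhds 0 one_pos)).hasDerivAt
  have := Complex.norm_deriv_le_one_of_mapsTo_ball hmd hmaps one_pos
  rwa [hderiv.deriv, one_sub_conj_mul_self, norm_mul, norm_inv, Complex.norm_real,
    Real.norm_of_nonneg ht.le, inv_mul_le_iff₀ ht, mul_one] at this

theorem norm_deriv_le_one_sub_sq_of_mapsTo_closedBall {f : ℂ → ℂ}
    (hd : DifferentiableOn ℂ f (ball 0 1)) (hf : MapsTo f (ball 0 1) (closedBall 0 1)) :
    ‖deriv f 0‖ ≤ 1 - ‖f 0‖ ^ 2 := by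
  rcases mapsTo_ball_or_eqOn_const hd hf with hf' | ⟨b, hb⟩
  · exact norm_deriv_le_one_sub_sq_of_mapsTo_ball hd hf'
  · rw [(hb.eventuallyEq_of_mem (ball_mem_nhds 0 one_pos)).deriv_eq, deriv_const, norm_zero,
      sub_nonneg]
    exact pow_le_one₀ (norm_nonneg _) (mem_closedBall_zero_iff.1 (hf (mem_ball_self one_pos)))

lemma dslope_smul_self {𝕜 E : Type*} [NontriviallyNormedField 𝕜] [NormedAddCommGroup E]
    [NormedSpace 𝕜 E] {k : 𝕜 → E} (hk : DifferentiableAt 𝕜 k 0) :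
    dslope (fun z => z • k z) 0 = k := by
  funext z
  rcases eq_or_ne z 0 with rfl | hz
  · have : HasDerivAt (fun z => z • k z) (k 0) 0 := by
      simpa using (hasDerivAt_id' 0).fun_smul hk.hasDerivAt
    rw [dslope_same, this.deriv]
  · rw [dslope_of_ne _ hz, slope_def_module]
    simp [smul_smul, hz]

def schurTransform (g : ℂ → ℂ) (z : ℂ) : ℂ := dslope g 0 z / (1 - conj (g 0) * g z)

lemma smul_schurTransform (g : ℂ → ℂ) :
    (fun z => z • schurTransform g z) = diskMobius (g 0) ∘ g := by
  funext z
  have hnum := sub_smul_dslope g 0 z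
  rw [sub_zero, smul_eq_mul] at hnum
  rw [Function.comp_apply, diskMobius, ← hnum, smul_eq_mul, schurTransform, mul_div_assoc]

lemma differentiableOn_schurTransform {g : ℂ → ℂ} (hd : DifferentiableOn ℂ g (ball 0 1))
    (hg : MapsTo g (ball 0 1) (ball 0 1)) :
    DifferentiableOn ℂ (schurTransform g) (ball 0 1) := by
  have ha : ‖g 0‖ < 1 := mem_ball_zero_iff.1 (hg (mem_ball_self one_pos))
  exact ((Complex.differentiableOn_dslope (ball_mem_nhds 0 one_pos)).2 hd).div
    ((differentiableOn_const _).sub ((differentiableOn_const _).mul hd)) fun z hz =>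
      one_sub_conj_mul_ne_zero ha (mem_ball_zero_iff.1 (hg hz)).le

lemma mapsTo_schurTransform {g : ℂ → ℂ} (hd : DifferentiableOn ℂ g (ball 0 1))
    (hg : MapsTo g (ball 0 1) (ball 0 1)) :
    MapsTo (schurTransform g) (ball 0 1) (closedBall 0 1) := by
  have ha : ‖g 0‖ < 1 := mem_ball_zero_iff.1 (hg (mem_ball_self one_pos))
  intro z hz
  rw [← dslope_smul_self ((differentiableOn_schurTransform hd hg).differentiableAt
    (ball_mem_nhds 0 one_pos)), smul_schurTransform, mem_closedBall_zero_iff]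
  refine (Complex.norm_dslope_le_div_of_mapsTo_ball (R₂ := 1) ?_ ?_ hz).trans_eq (div_one 1)
  · exact fun z hz => (differentiableAt_diskMobius ha
      (mem_ball_zero_iff.1 (hg hz)).le).comp_differentiableWithinAt z (hd z hz)
  · intro z hz
    rw [Function.comp_apply, Function.comp_apply, diskMobius_self, mem_closedBall_zero_iff]
    exact (norm_diskMobius_lt_one ha (mem_ball_zero_iff.1 (hg hz))).le

theorem norm_coeff_two_mul_add_conj_mul_sq_le {g : ℂ → ℂ} {p : FormalMultilinearSeries ℂ ℂ ℂ}
    (hp : HasFPowerSeriesAt g p 0) (hd : DifferentiableOn ℂ g (ball 0 1))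
    (hg : MapsTo g (ball 0 1) (ball 0 1)) :
    ‖p.coeff 2 * ((1 - ‖p.coeff 0‖ ^ 2 : ℝ) : ℂ) + conj (p.coeff 0) * p.coeff 1 ^ 2‖ ≤
      (1 - ‖p.coeff 0‖ ^ 2) ^ 2 - ‖p.coeff 1‖ ^ 2 := by
  set a := p.coeff 0
  set t : ℝ := 1 - ‖a‖ ^ 2
  have hga : g 0 = a := (hp.coeff_zero _).symm
  have ht : 0 < t := sub_pos.2 (pow_lt_one₀ (norm_nonneg a) (hga ▸
    mem_ball_zero_iff.1 (hg (mem_ball_self one_pos))) two_ne_zero)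
  have hG : HasFPowerSeriesAt (dslope g 0) p.fslope 0 := hp.has_fpower_series_dslope_fslope
  have hG0 : dslope g 0 0 = p.coeff 1 := by
    rw [← hG.coeff_zero (fun _ => 1), ← FormalMultilinearSeries.coeff_fslope]; rfl
  have hG' : HasDerivAt (dslope g 0) (p.coeff 2) 0 := by
    have := hG.hasDerivAt
    rwa [show (p.fslope 1 fun _ => 1) = p.fslope.coeff 1 from rfl,
      FormalMultilinearSeries.coeff_fslope] at this
  have hden0 : 1 - conj (g 0) * g 0 = t := by rw [hga, one_sub_conj_mul_self]
  have hS0 : schurTransform g 0 = p.coeff 1 / t := by rw [schurTransform, hG0, hden0]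
  have hS' : HasDerivAt (schurTransform g)
      ((p.coeff 2 * t + conj a * p.coeff 1 ^ 2) / (t : ℂ) ^ 2) 0 := by
    have hg' : HasDerivAt g (p.coeff 1) 0 := hp.hasDerivAt
    have := hG'.div ((hg'.const_mul (conj (g 0))).const_sub 1)
      (hden0 ▸ Complex.ofReal_ne_zero.2 ht.ne')
    rw [hG0, hden0] at this
    exact HasDerivAt.congr_deriv (f := schurTransform g) this (by rw [hga]; ring)
  have hSP := norm_deriv_le_one_sub_sq_of_mapsTo_closedBall
    (differentiableOn_schurTransform hd hg) (mapsTo_schurTransform hd hg)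
  rw [hS'.deriv, hS0, norm_div, norm_div, norm_pow, Complex.norm_real, Real.norm_of_nonneg ht.le,
    div_le_iff₀ (by positivity)] at hSP
  calc _ ≤ (1 - (‖p.coeff 1‖ / t) ^ 2) * t ^ 2 := hSP
    _ = t ^ 2 - ‖p.coeff 1‖ ^ 2 := by field_simp

-- The next lemma squared, in the coordinates `t = 1 - ‖a‖²`, `Y = ‖b‖²`, `u = Re(a² b̄)`.
lemma coord_poly_le_sq {t Y u σ μ : ℝ} (ht0 : 0 < t) (ht1 : t ≤ 1) (hY0 : 0 ≤ Y) (hYt : Y ≤ t ^ 2)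
    (hμ : 1 ≤ μ) (hσμ : σ ^ 2 + 8 ≤ 12 * μ) :
    σ ^ 2 * (1 - t) * Y * t ^ 2 + μ ^ 2 * (1 - t) ^ 3 * t ^ 2 + (1 - t) * Y ^ 2
      + 2 * σ * μ * t ^ 2 * (1 - t) * u - 2 * σ * t * Y * u - 4 * μ * t * u ^ 2
      + 2 * μ * t * (1 - t) ^ 2 * Y ≤ (t * μ - t ^ 2 + Y) ^ 2 := by
  have hsum : 4 * μ * t ^ 2 * ((t * μ - t ^ 2 + Y) ^ 2 - (σ ^ 2 * (1 - t) * Y * t ^ 2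
      + μ ^ 2 * (1 - t) ^ 3 * t ^ 2 + (1 - t) * Y ^ 2 + 2 * σ * μ * t ^ 2 * (1 - t) * u
      - 2 * σ * t * Y * u - 4 * μ * t * u ^ 2 + 2 * μ * t * (1 - t) ^ 2 * Y)) =
      4 * (μ - 1) * t * ((t ^ 2 - Y) * t ^ 3 * (2 * (1 - t) + (5 - 4 * t) * (μ - 1)
        + (3 - 2 * t) * (μ - 1) ^ 2) + Y * t ^ 3 * (3 * (μ - 1) + (3 - 2 * t) * (μ - 1) ^ 2)
        + 2 * Y * t ^ 2 * (t ^ 2 - Y))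
      + t ^ 3 * (12 * μ - σ ^ 2 - 8) * (Y + (1 - t) * t * μ) ^ 2
      + t ^ 3 * (σ * (μ * t * (1 - t) - Y) - 4 * μ * u) ^ 2 := by
    ring
  have : 0 ≤ μ - 1 := by linarith
  have : 0 ≤ t ^ 2 - Y := by linarith
  have : 0 ≤ 12 * μ - σ ^ 2 - 8 := by linarith
  have : 0 ≤ 1 - t := by linarith
  have : 0 ≤ 3 - 2 * t := by linarith
  have : 0 ≤ 5 - 4 * t := by linarith
  have hpos : 0 < 4 * μ * t ^ 2 := by positivity
  rw [← sub_nonneg, ← mul_nonneg_iff_of_pos_left hpos, hsum]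
  positivity

lemma norm_mul_sub_conj_mul_sq_le {a b : ℂ} {σ μ : ℝ} (ha : ‖a‖ < 1) (hb : ‖b‖ ≤ 1 - ‖a‖ ^ 2)
    (hμ : 1 ≤ μ) (hσμ : σ ^ 2 + 8 ≤ 12 * μ) :
    ‖((1 - ‖a‖ ^ 2 : ℝ) : ℂ) * (σ * a * b + μ * a ^ 3) - conj a * b ^ 2‖ ≤
      (1 - ‖a‖ ^ 2) * μ - (1 - ‖a‖ ^ 2) ^ 2 + ‖b‖ ^ 2 := by
  set t := 1 - ‖a‖ ^ 2 with ht
  have ht0 : 0 < t := sub_pos.2 (pow_lt_one₀ (norm_nonneg a) ha two_ne_zero)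
  have hR : 0 ≤ t * μ - t ^ 2 + ‖b‖ ^ 2 := by nlinarith
  have hcoord : ‖((t : ℝ) : ℂ) * (σ * a * b + μ * a ^ 3) - conj a * b ^ 2‖ ^ 2 =
      σ ^ 2 * (1 - t) * ‖b‖ ^ 2 * t ^ 2 + μ ^ 2 * (1 - t) ^ 3 * t ^ 2 + (1 - t) * (‖b‖ ^ 2) ^ 2
      + 2 * σ * μ * t ^ 2 * (1 - t) * (a ^ 2 * conj b).re
      - 2 * σ * t * ‖b‖ ^ 2 * (a ^ 2 * conj b).re - 4 * μ * t * (a ^ 2 * conj b).re ^ 2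
      + 2 * μ * t * (1 - t) ^ 2 * ‖b‖ ^ 2 := by
    rw [ht]
    simp only [Complex.sq_norm]
    simp only [Complex.normSq_apply, Complex.sub_re, Complex.sub_im,
      Complex.add_re, Complex.add_im, Complex.mul_re, Complex.mul_im, Complex.conj_re,
      Complex.conj_im, Complex.ofReal_re, Complex.ofReal_im, pow_succ, pow_zero, one_mul]
    ring
  rw [← pow_le_pow_iff_left₀ (norm_nonneg _) hR two_ne_zero, hcoord]
  exact coord_poly_le_sq ht0 (by linarith [sq_nonneg ‖a‖]) (sq_nonneg _)
    (pow_le_pow_left₀ (norm_nonneg b) hb 2) hμ hσμ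

theorem norm_add_mul_add_mul_pow_le {a b d : ℂ} {σ μ : ℝ} (ha : ‖a‖ < 1)
    (h : ‖d * ((1 - ‖a‖ ^ 2 : ℝ) : ℂ) + conj a * b ^ 2‖ ≤ (1 - ‖a‖ ^ 2) ^ 2 - ‖b‖ ^ 2)
    (hμ : 1 ≤ μ) (hσμ : σ ^ 2 + 8 ≤ 12 * μ) :
    ‖d + σ * a * b + μ * a ^ 3‖ ≤ μ := by
  set t := 1 - ‖a‖ ^ 2
  have ht0 : 0 < t := sub_pos.2 (pow_lt_one₀ (norm_nonneg a) ha two_ne_zero)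
  have hb : ‖b‖ ≤ t := (pow_le_pow_iff_left₀ (norm_nonneg _) ht0.le two_ne_zero).1 <| by
    linarith [norm_nonneg (d * (t : ℂ) + conj a * b ^ 2)]
  have hsplit : (t : ℂ) * (d + σ * a * b + μ * a ^ 3) =
      (d * t + conj a * b ^ 2) + ((t : ℂ) * (σ * a * b + μ * a ^ 3) - conj a * b ^ 2) := by
    ring
  refine le_of_mul_le_mul_left ?_ ht0
  calc t * ‖d + σ * a * b + μ * a ^ 3‖ = ‖(t : ℂ) * (d + σ * a * b + μ * a ^ 3)‖ := by
        rw [norm_mul, Complex.norm_real, Real.norm_of_nonneg ht0.le]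
    _ ≤ ‖d * t + conj a * b ^ 2‖ + ‖(t : ℂ) * (σ * a * b + μ * a ^ 3) - conj a * b ^ 2‖ :=
        hsplit ▸ norm_add_le _ _
    _ ≤ (t ^ 2 - ‖b‖ ^ 2) + (t * μ - t ^ 2 + ‖b‖ ^ 2) :=
        add_le_add h (norm_mul_sub_conj_mul_sq_le ha hb hμ hσμ)
    _ = t * μ := by ring

lemma hasFPowerSeriesAt_ofScalars_of_hasSum {𝕜 : Type*} [NontriviallyNormedField 𝕜]
    {f : 𝕜 → 𝕜} {c : ℕ → 𝕜} {r : ℝ} (hr : 0 < r)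
    (h : ∀ z ∈ ball (0 : 𝕜) r, HasSum (fun n => c n * z ^ n) (f z)) :
    HasFPowerSeriesAt f (FormalMultilinearSeries.ofScalars 𝕜 c) 0 := by
  rw [hasFPowerSeriesAt_iff]
  filter_upwards [ball_mem_nhds 0 hr] with z hz
  simpa [FormalMultilinearSeries.coeff_ofScalars, mul_comm] using h z hz

lemma HasFPowerSeriesAt.coeff_succ_eq_zero_of_eventuallyEq_const {𝕜 E : Type*}
    [NontriviallyNormedField 𝕜] [NormedAddCommGroup E] [NormedSpace 𝕜 E] {f : 𝕜 → E}
    {p : FormalMultilinearSeries 𝕜 𝕜 E} {x : 𝕜} {b : E} (hp : HasFPowerSeriesAt f p x)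
    (hf : f =ᶠ[𝓝 x] fun _ => b) (n : ℕ) : p.coeff (n + 1) = 0 := by
  rw [hp.eq_formalMultilinearSeries (hasFPowerSeriesAt_const.congr hf.symm)]
  simp [FormalMultilinearSeries.coeff]

lemma IsSchwarz.differentiableOn_dslope {w : ℂ → ℂ} (hw : IsSchwarz w) :
    DifferentiableOn ℂ (dslope w 0) (ball 0 1) :=
  (Complex.differentiableOn_dslope (ball_mem_nhds 0 one_pos)).2 hw.1

lemma IsSchwarz.mapsTo_dslope {w : ℂ → ℂ} (hw : IsSchwarz w) :
    MapsTo (dslope w 0) (ball 0 1) (closedBall 0 1) := fun z hz => by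
  obtain ⟨hwd, hw0, hwm⟩ := hw
  rw [mem_closedBall_zero_iff, ← div_one (1 : ℝ)]
  exact Complex.norm_dslope_le_div_of_mapsTo_ball hwd
    (fun z hz => by rw [hw0]; exact ball_subset_closedBall (hwm z hz)) hz

theorem stmt_3_general (w : ℂ → ℂ) (c : ℕ → ℂ) (σ μ : ℝ)
    (hw : IsSchwarz w)
    (hcsum : ∀ z ∈ ball (0:ℂ) 1, HasSum (fun n => c n * z ^ n) (w z))
    (hσ : 2 ≤ |σ| ∧ |σ| ≤ 4) (hμ : (σ ^ 2 + 8) / 12 ≤ μ) :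
    ‖c 3 + (σ : ℂ) * c 1 * c 2 + (μ : ℂ) * c 1 ^ 3‖ ≤ μ := by
  have hσμ : σ ^ 2 + 8 ≤ 12 * μ := by linarith
  have hμ1 : 1 ≤ μ := by nlinarith [sq_abs σ]
  have hp : HasFPowerSeriesAt (dslope w 0) (FormalMultilinearSeries.ofScalars ℂ c).fslope 0 :=
    (hasFPowerSeriesAt_ofScalars_of_hasSum one_pos hcsum).has_fpower_series_dslope_fslope
  have hcoeff (n : ℕ) : (FormalMultilinearSeries.ofScalars ℂ c).fslope.coeff n = c (n + 1) := by
    rw [FormalMultilinearSeries.coeff_fslope, FormalMultilinearSeries.coeff_ofScalars]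
  have hg0 : dslope w 0 0 = c 1 := by rw [← hcoeff 0]; exact (hp.coeff_zero _).symm
  rcases mapsTo_ball_or_eqOn_const hw.differentiableOn_dslope hw.mapsTo_dslope with hg | ⟨b, hb⟩
  · have hcarlson := norm_coeff_two_mul_add_conj_mul_sq_le hp hw.differentiableOn_dslope hg
    simp only [hcoeff] at hcarlson
    exact norm_add_mul_add_mul_pow_le (mem_ball_zero_iff.1 (hg0 ▸ hg (mem_ball_self one_pos)))
      hcarlson hμ1 hσμ
  · have hconst := hb.eventuallyEq_of_mem (ball_mem_nhds 0 one_pos)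
    have hc2 := hcoeff 1 ▸ hp.coeff_succ_eq_zero_of_eventuallyEq_const hconst 0
    have hc3 := hcoeff 2 ▸ hp.coeff_succ_eq_zero_of_eventuallyEq_const hconst 1
    have hc1 : ‖c 1‖ ≤ 1 :=
      mem_closedBall_zero_iff.1 (hg0 ▸ hw.mapsTo_dslope (mem_ball_self one_pos))
    rw [hc2, hc3, mul_zero, zero_add, zero_add, norm_mul, norm_pow, Complex.norm_real,
      Real.norm_of_nonneg (by linarith)]
    exact mul_le_of_le_one_right (by linarith) (pow_le_one₀ (norm_nonneg _) hc1)

theorem stmt_3 (w : ℂ → ℂ) (c : ℕ → ℂ) (σ μ : ℝ)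
    (hw : IsSchwarz w) (hc0 : c 0 = 0)
    (hcsum : ∀ z ∈ ball (0:ℂ) 1, HasSum (fun n => c n * z ^ n) (w z))
    (hσ : 2 ≤ |σ| ∧ |σ| ≤ 4) (hμ : (σ ^ 2 + 8) / 12 ≤ μ) :
    ‖c 3 + (σ : ℂ) * c 1 * c 2 + (μ : ℂ) * c 1 ^ 3‖ ≤ μ :=
  stmt_3_general w c σ μ hw hcsum hσ hμ
end
end

section
/- If f ∈ S*_L, i.e., zf'(z)/f(z) ≺ √(1+z²) (lemniscate-related class of Sokół–Stankiewicz variant), then |Γ₁² - Γ₂²| ≤ 1/64 and |b₂² - b₃²| ≤ 1/16, where Γₙ are the logarithmic coefficients of f⁻¹ and bₙ its Taylor coefficients. Both bounds are sharp. -/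
open Complex Metric

noncomputable section

open Filter Topology FormalMultilinearSeries
open scoped NNReal Nat

/-!
Write `f z = z * u z` with `u = dslope f 0`, so `u 0 = 1`, `u' 0 = a₂`, `u'' 0 = 2 a₃`. Squaring
`z f' = √(1 + w²) f` removes the square root: `(u + z u')² = (1 + w²) u²`. With `w = z ω` this is
`z L = 0` for the analytic function `L = u' (2u + z u') - z ω² u²`, so `L` vanishes near `0`.
Then `L 0 = 0` gives `a₂ = 0` and `L' 0 = 0` gives `4 a₃ = ω(0)² = w'(0)²`, so `|a₃| ≤ 1/4` by
Schwarz's lemma. Once `a₂ = 0`, the two functionals are `-a₃²/4` and `-a₃²`. Equality holds for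
`w = id`, i.e. for `f z = 2 z exp (√(1 + z²) - 1) / (1 + √(1 + z²))`.
-/

theorem le_radius_ofScalars_of_hasSum {a : ℕ → ℂ} {f : ℂ → ℂ}
    (h : ∀ z ∈ ball (0 : ℂ) 1, HasSum (fun n => a n * z ^ n) (f z)) :
    1 ≤ (ofScalars ℂ a).radius := by
  refine ENNReal.le_of_forall_nnreal_lt fun r hr => ?_
  have hr1 : (r : ℂ) ∈ ball (0 : ℂ) 1 := by simpa using hr
  refine (ofScalars ℂ a).le_radius_of_tendsto (l := 0) ?_
  simpa [ofScalars_norm] using (h _ hr1).summable.tendsto_atTop_zero.norm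

theorem hasFPowerSeriesOnBall_ofScalars_of_hasSum {a : ℕ → ℂ} {f : ℂ → ℂ}
    (h : ∀ z ∈ ball (0 : ℂ) 1, HasSum (fun n => a n * z ^ n) (f z)) :
    HasFPowerSeriesOnBall f (ofScalars ℂ a) 0 1 where
  r_le := le_radius_ofScalars_of_hasSum h
  r_pos := one_pos
  hasSum {y} hy := by
    have hy1 : ‖y‖ < 1 := by simpa [enorm_eq_nnnorm, ← NNReal.coe_lt_one] using hy
    simpa [ofScalars_apply_eq, mul_comm] using h y (by simpa using hy1)

theorem HasFPowerSeriesAt.iteratedDeriv_eq {𝕜 : Type*} [NontriviallyNormedField 𝕜]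
    [CompleteSpace 𝕜] [CharZero 𝕜] {g : 𝕜 → 𝕜} {p : FormalMultilinearSeries 𝕜 𝕜 𝕜} {x : 𝕜}
    (h : HasFPowerSeriesAt g p x) (n : ℕ) : iteratedDeriv n g x = n ! * p.coeff n := by
  have hp := congrArg (coeff · n) (h.eq_formalMultilinearSeries h.analyticAt.hasFPowerSeriesAt)
  simp only [coeff_ofScalars] at hp
  rw [hp, mul_div_cancel₀ _ (by exact_mod_cast n.factorial_ne_zero)]

theorem DifferentiableOn.hasFPowerSeriesOnBall_of_ball {E : Type*}
    [NormedAddCommGroup E] [NormedSpace ℂ E] [CompleteSpace E] {f : ℂ → E} {c : ℂ} {R : ℝ≥0}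
    (hd : DifferentiableOn ℂ f (ball c R)) (hR : 0 < R) :
    HasFPowerSeriesOnBall f (cauchyPowerSeries f c (R / 2)) c R := by
  have hsmall (r : ℝ≥0) (hr : 0 < r) (hrR : r < R) :
      HasFPowerSeriesOnBall f (cauchyPowerSeries f c r) c r :=
    (hd.mono (closedBall_subset_ball (by exact_mod_cast hrR))).hasFPowerSeriesOnBall hr
  have hhalf := hsmall (R / 2) (half_pos hR) (half_lt_self hR)
  refine ⟨ENNReal.le_of_forall_pos_nnreal_lt fun r hr hrR => ?_, by simpa using hR,
    fun {y} hy => ?_⟩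
  · exact (hhalf.exchange_radius (hsmall r hr (by exact_mod_cast hrR))).r_le
  · obtain ⟨r, hyr, hrR⟩ := exists_between (ENNReal.coe_lt_coe.1 (mem_eball_zero_iff.1 hy))
    exact (hhalf.exchange_radius (hsmall r (hyr.trans_le' bot_le) hrR)).hasSum
      (mem_eball_zero_iff.2 (ENNReal.coe_lt_coe.2 hyr))

theorem exists_inClassA_of_differentiableOn {f : ℂ → ℂ} (hd : DifferentiableOn ℂ f (ball 0 1))
    (h0 : f 0 = 0) (h1 : deriv f 0 = 1) : ∃ a, InClassA f a := by
  have hp := hd.hasFPowerSeriesOnBall_of_ball (R := 1) one_pos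
  refine ⟨(cauchyPowerSeries f 0 (1 / 2)).coeff, ?_, ?_, fun z hz => ?_⟩
  · exact (hp.coeff_zero fun _ => 1).trans h0
  · exact hp.hasFPowerSeriesAt.deriv.symm.trans h1
  · have hz' : z ∈ Metric.eball (0 : ℂ) (1 : ℝ≥0) := by
      simpa [enorm_eq_nnnorm, ← NNReal.coe_lt_one] using hz
    simpa [apply_eq_pow_smul_coeff, mul_comm] using hp.hasSum hz'

namespace InClassA

variable {f : ℂ → ℂ} {a : ℕ → ℂ}

theorem hasFPowerSeriesOnBall (hA : InClassA f a) :
    HasFPowerSeriesOnBall f (ofScalars ℂ a) 0 1 :=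
  hasFPowerSeriesOnBall_ofScalars_of_hasSum hA.2.2

theorem eq_mul_dslope (hA : InClassA f a) (z : ℂ) : f z = z * dslope f 0 z := by
  have hf0 : f 0 = 0 := by
    simpa [hA.1] using (hA.hasFPowerSeriesOnBall.coeff_zero fun _ => 1).symm
  simpa [hf0] using (sub_smul_dslope f 0 z).symm

theorem iteratedDeriv_dslope (hA : InClassA f a) (n : ℕ) :
    iteratedDeriv n (dslope f 0) 0 = n ! * a (n + 1) := by
  rw [hA.hasFPowerSeriesOnBall.hasFPowerSeriesAt.has_fpower_series_dslope_fslope.iteratedDeriv_eq,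
    coeff_fslope, coeff_ofScalars]

end InClassA

theorem deriv_eq_zero_and_deriv_deriv_eq_of_sq_eq {u w : ℂ → ℂ} (hu : AnalyticAt ℂ u 0)
    (hw : AnalyticAt ℂ w 0) (hu0 : u 0 = 1) (hw0 : w 0 = 0)
    (h : ∀ᶠ z in 𝓝[≠] 0, (u z + z * deriv u z) ^ 2 = (1 + w z ^ 2) * u z ^ 2) :
    deriv u 0 = 0 ∧ deriv (deriv u) 0 = deriv w 0 ^ 2 / 2 := by
  set ω := dslope w 0
  have hω : AnalyticAt ℂ ω 0 := by
    obtain ⟨p, hp⟩ := hw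
    exact ⟨_, hp.has_fpower_series_dslope_fslope⟩
  have hwω (z : ℂ) : w z = z * ω z := by simpa [hw0] using (sub_smul_dslope w 0 z).symm
  set L : ℂ → ℂ := fun z => deriv u z * (2 * u z + z * deriv u z) - z * ω z ^ 2 * u z ^ 2
  have hu' := hu.deriv
  have hL : ∀ᶠ z in 𝓝 0, L z = 0 := by
    have hLa : AnalyticAt ℂ L 0 := by fun_prop
    refine hLa.frequently_zero_iff_eventually_zero.1
      ((h.and self_mem_nhdsWithin).mono fun z ⟨hz, hz0⟩ => ?_).frequently
    refine (mul_eq_zero.1 ?_).resolve_left hz0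
    rw [hwω] at hz
    linear_combination hz
  have hL0 : deriv u 0 = 0 := by simpa [L, hu0] using hL.self_of_nhds
  have hL' : HasDerivAt L (deriv (deriv u) 0 * 2 - deriv w 0 ^ 2) 0 := by
    have h1 := hu.differentiableAt.hasDerivAt
    have h2 := hu'.differentiableAt.hasDerivAt
    have h3 := hω.differentiableAt.hasDerivAt
    refine ((h2.mul ((h1.const_mul 2).add ((hasDerivAt_id' 0).mul h2))).sub
      (((hasDerivAt_id' 0).mul (h3.pow 2)).mul (h1.pow 2))).congr_deriv ?_
    simp [hu0, hL0, ω]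
  refine ⟨hL0, ?_⟩
  have := hL'.unique ((hasDerivAt_const 0 0).congr_of_eventuallyEq hL)
  linear_combination this / 2

def sqrtOnePlusSq (z : ℂ) : ℂ := (1 + z ^ 2) ^ ((1 : ℂ) / 2)

theorem sqrtOnePlusSq_sq (z : ℂ) : sqrtOnePlusSq z ^ 2 = 1 + z ^ 2 := by
  simp [sqrtOnePlusSq, one_div]

theorem InClassA.coeff_two_eq_zero_and_coeff_three_eq {f : ℂ → ℂ} {a : ℕ → ℂ} {w : ℂ → ℂ}
    (hA : InClassA f a) (hw : AnalyticAt ℂ w 0) (hw0 : w 0 = 0)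
    (h : ∀ᶠ z in 𝓝 0, z * deriv f z = sqrtOnePlusSq (w z) * f z) :
    a 2 = 0 ∧ a 3 = deriv w 0 ^ 2 / 4 := by
  set u := dslope f 0
  have hu : AnalyticAt ℂ u 0 :=
    hA.hasFPowerSeriesOnBall.hasFPowerSeriesAt.has_fpower_series_dslope_fslope.analyticAt
  have hcoeff := hA.iteratedDeriv_dslope
  have hu0 : u 0 = 1 := by simpa [u, hA.2.1] using hcoeff 0
  have hu1 : deriv u 0 = a 2 := by simpa using hcoeff 1
  have hu2 : deriv (deriv u) 0 = 2 * a 3 := by simpa [iteratedDeriv_succ] using hcoeff 2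
  have hsq : ∀ᶠ z in 𝓝[≠] 0, (u z + z * deriv u z) ^ 2 = (1 + w z ^ 2) * u z ^ 2 := by
    refine eventually_nhdsWithin_iff.2
      ((h.and hu.eventually_analyticAt).mono fun z ⟨hz, hua⟩ hz0 => ?_)
    have hdf : deriv f z = u z + z * deriv u z := by
      rw [show f = fun z => z * u z from funext hA.eq_mul_dslope]
      exact ((hasDerivAt_id' z).mul hua.differentiableAt.hasDerivAt).deriv.trans (by rw [one_mul])
    rw [hdf, hA.eq_mul_dslope z] at hz
    have := congrArg (· ^ 2) hz
    simp only [mul_pow, sqrtOnePlusSq_sq] at this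
    exact mul_left_cancel₀ (pow_ne_zero 2 hz0) (by linear_combination this)
  obtain ⟨h2, h3⟩ := deriv_eq_zero_and_deriv_deriv_eq_of_sq_eq hu hw hu0 hw0 hsq
  exact ⟨hu1 ▸ h2, by linear_combination (h3 - hu2) / 2⟩

namespace IsSchwarz

variable {w : ℂ → ℂ}

theorem analyticAt (hw : IsSchwarz w) : AnalyticAt ℂ w 0 :=
  hw.1.analyticAt (ball_mem_nhds 0 one_pos)

theorem norm_deriv_le_one (hw : IsSchwarz w) : ‖deriv w 0‖ ≤ 1 :=
  norm_deriv_le_one_of_mapsTo_ball hw.1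
    (fun z hz => by simpa [hw.2.1] using ball_subset_closedBall (hw.2.2 z hz)) one_pos

theorem id : IsSchwarz id := ⟨differentiableOn_id, rfl, fun _ hz => hz⟩

end IsSchwarz

theorem InClassA.coeff_two_eq_zero_and_norm_coeff_three_le {f : ℂ → ℂ} {a : ℕ → ℂ}
    (hA : InClassA f a) (hf : MemStarPhi sqrtOnePlusSq f) : a 2 = 0 ∧ ‖a 3‖ ≤ 1 / 4 := by
  obtain ⟨w, hw, h⟩ := hf
  obtain ⟨h2, h3⟩ := hA.coeff_two_eq_zero_and_coeff_three_eq hw.analyticAt hw.2.1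
    (eventually_of_mem (ball_mem_nhds 0 one_pos) h)
  refine ⟨h2, ?_⟩
  rw [h3, norm_div, norm_pow, RCLike.norm_ofNat]
  have := hw.norm_deriv_le_one
  nlinarith [norm_nonneg (deriv w 0)]

theorem one_add_sq_mem_slitPlane {z : ℂ} (hz : z ∈ ball (0 : ℂ) 1) : 1 + z ^ 2 ∈ slitPlane := by
  have hz2 : |(z ^ 2).re| < 1 := by
    refine (abs_re_le_norm _).trans_lt ?_
    rw [norm_pow]
    have : ‖z‖ < 1 := by simpa using hz
    nlinarith [norm_nonneg z]
  left
  simp only [add_re, one_re]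
  linarith [neg_abs_le (z ^ 2).re]

theorem sqrtOnePlusSq_ne_zero {z : ℂ} (hz : z ∈ ball (0 : ℂ) 1) : sqrtOnePlusSq z ≠ 0 := by
  intro h
  have := sqrtOnePlusSq_sq z
  rw [h, zero_pow two_ne_zero] at this
  exact slitPlane_ne_zero (one_add_sq_mem_slitPlane hz) this.symm

theorem one_add_sqrtOnePlusSq_ne_zero (z : ℂ) : 1 + sqrtOnePlusSq z ≠ 0 := by
  intro h
  have hsq := sqrtOnePlusSq_sq z
  rw [eq_neg_of_add_eq_zero_right h] at hsq
  have hz : z = 0 := pow_eq_zero_iff two_ne_zero |>.1 (by linear_combination -hsq)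
  simp [hz, sqrtOnePlusSq] at h

theorem hasDerivAt_sqrtOnePlusSq {z : ℂ} (hz : z ∈ ball (0 : ℂ) 1) :
    HasDerivAt sqrtOnePlusSq (z / sqrtOnePlusSq z) z := by
  have h := ((hasDerivAt_pow 2 z).const_add 1).cpow_const (c := 1 / 2)
    (one_add_sq_mem_slitPlane hz)
  refine h.congr_deriv ?_
  rw [cpow_sub _ _ (slitPlane_ne_zero (one_add_sq_mem_slitPlane hz)), cpow_one, show (1 + z ^ 2) ^ ((1 : ℂ) / 2) = sqrtOnePlusSq z from rfl, ← sqrtOnePlusSq_sq z]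
  have hne := sqrtOnePlusSq_ne_zero hz
  field_simp
  norm_num

-- Solves `z f' / f = √(1 + z²)`: `log (f z / z) = ∫₀ᶻ (√(1 + t²) - 1) / t dt
-- = √(1 + z²) - 1 - log ((1 + √(1 + z²)) / 2)`.
def extremalFactor (z : ℂ) : ℂ := 2 * exp (sqrtOnePlusSq z - 1) / (1 + sqrtOnePlusSq z)

def extremalFun (z : ℂ) : ℂ := z * extremalFactor z

theorem hasDerivAt_extremalFactor {z : ℂ} (hz : z ∈ ball (0 : ℂ) 1) :
    HasDerivAt extremalFactor (z / (1 + sqrtOnePlusSq z) * extremalFactor z) z := by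
  have hφ := hasDerivAt_sqrtOnePlusSq hz
  refine ((((hφ.sub_const 1).cexp).const_mul 2).div (hφ.const_add 1)
    (one_add_sqrtOnePlusSq_ne_zero z)).congr_deriv ?_
  have h1 := sqrtOnePlusSq_ne_zero hz
  have h2 := one_add_sqrtOnePlusSq_ne_zero z
  simp only [extremalFactor]
  field_simp
  ring

theorem hasDerivAt_extremalFun {z : ℂ} (hz : z ∈ ball (0 : ℂ) 1) :
    HasDerivAt extremalFun
      (extremalFactor z + z * (z / (1 + sqrtOnePlusSq z) * extremalFactor z)) z :=
  ((hasDerivAt_id' z).mul (hasDerivAt_extremalFactor hz)).congr_deriv (by rw [one_mul])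

theorem mul_deriv_extremalFun {z : ℂ} (hz : z ∈ ball (0 : ℂ) 1) :
    z * deriv extremalFun z = sqrtOnePlusSq z * extremalFun z := by
  rw [(hasDerivAt_extremalFun hz).deriv, extremalFun]
  have h := one_add_sqrtOnePlusSq_ne_zero z
  field_simp
  linear_combination -(z * extremalFactor z) * sqrtOnePlusSq_sq z

theorem deriv_extremalFun_zero : deriv extremalFun 0 = 1 := by
  rw [(hasDerivAt_extremalFun (mem_ball_self one_pos)).deriv]
  norm_num [extremalFactor, sqrtOnePlusSq]

theorem exists_extremal :
    ∃ f a, InClassA f a ∧ MemStarPhi sqrtOnePlusSq f ∧ a 2 = 0 ∧ a 3 = 1 / 4 := by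
  have hd : DifferentiableOn ℂ extremalFun (ball 0 1) := fun z hz =>
    (hasDerivAt_extremalFun hz).differentiableAt.differentiableWithinAt
  obtain ⟨a, hA⟩ := exists_inClassA_of_differentiableOn hd (by simp [extremalFun])
    deriv_extremalFun_zero
  obtain ⟨h2, h3⟩ := hA.coeff_two_eq_zero_and_coeff_three_eq analyticAt_id rfl
    (eventually_of_mem (ball_mem_nhds 0 one_pos) fun z hz => mul_deriv_extremalFun hz)
  exact ⟨extremalFun, a, hA, ⟨id, IsSchwarz.id, fun z hz => mul_deriv_extremalFun hz⟩, h2,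
    by simpa using h3⟩

theorem G₁_sq_sub_G₂_sq {a : ℕ → ℂ} (h : a 2 = 0) : G₁ a ^ 2 - G₂ a ^ 2 = -(a 3 ^ 2 / 4) := by
  simp only [G₁, G₂, h]
  ring

theorem bc₂_sq_sub_bc₃_sq {a : ℕ → ℂ} (h : a 2 = 0) : bc₂ a ^ 2 - bc₃ a ^ 2 = -a 3 ^ 2 := by
  simp only [bc₂, bc₃, h]
  ring

theorem stmt_19 :
    (∀ f a, InClassA f a → MemStarPhi (fun z => (1 + z ^ 2) ^ ((1 : ℂ)/2)) f →
      ‖G₁ a ^ 2 - G₂ a ^ 2‖ ≤ 1/64 ∧ ‖bc₂ a ^ 2 - bc₃ a ^ 2‖ ≤ 1/16) ∧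
    (∃ f a, InClassA f a ∧ MemStarPhi (fun z => (1 + z ^ 2) ^ ((1 : ℂ)/2)) f ∧ ‖G₁ a ^ 2 - G₂ a ^ 2‖ = 1/64) ∧
    (∃ f a, InClassA f a ∧ MemStarPhi (fun z => (1 + z ^ 2) ^ ((1 : ℂ)/2)) f ∧ ‖bc₂ a ^ 2 - bc₃ a ^ 2‖ = 1/16) := by
  obtain ⟨f₀, a₀, hA₀, hf₀, ha₂, ha₃⟩ := exists_extremal
  refine ⟨fun f a hA hf => ?_, ⟨f₀, a₀, hA₀, hf₀, ?_⟩, ⟨f₀, a₀, hA₀, hf₀, ?_⟩⟩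
  · obtain ⟨h2, h3⟩ := hA.coeff_two_eq_zero_and_norm_coeff_three_le hf
    rw [G₁_sq_sub_G₂_sq h2, bc₂_sq_sub_bc₃_sq h2, norm_neg, norm_neg, norm_div, norm_pow,
      RCLike.norm_ofNat]
    constructor <;> nlinarith [norm_nonneg (a 3)]
  · rw [G₁_sq_sub_G₂_sq ha₂, ha₃]
    norm_num
  · rw [bc₂_sq_sub_bc₃_sq ha₂, ha₃]
    norm_num
end
end
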